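/- Fix p, q ∈ ℝ and let 𝓕 = {(x,y) ∈ ℝ² : F(x,y) = 0} be Beloch's curve and 𝓖 = {(x,y) ∈ ℝ² : 4x + y² = 0} the parabola with focus (−1,0) and directrix x = 1. Then: 𝓕 ∩ 𝓖 = ∅ if and only if 4p + q² < 0; 𝓕 ∩ 𝓖 consists of exactly one point if and only if 4p + q² = 0; and 𝓕 ∩ 𝓖 contains at least two points if and only if 4p + q² > 0. -/
import Mathlib


/-- Beloch's polynomial `F(x,y)` associated with `P = (p,q)`. -/
def belochF (p q x y : ℝ) : ℝ :=
  2 * (q - y) ^ 2 - (q + y) * (q - y) * (p - x) - (p - x) ^ 2 * (p + x)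

/-- Beloch's curve `𝓕 = {F = 0}`. -/
def belochCurve (p q : ℝ) : Set (ℝ × ℝ) := {X | belochF p q X.1 X.2 = 0}

/-- The parabola `𝓖 : 4x + y² = 0` with focus `(-1,0)` and directrix `x = 1`. -/
def parabolaG : Set (ℝ × ℝ) := {X | 4 * X.1 + X.2 ^ 2 = 0}

namespace Stmt16Aux

/-- The key algebraic identity for `F` restricted to the parabola. -/
lemma key (p q y : ℝ) :
    128 * belochF p q (-(y ^ 2) / 4) y =
      ((q - y) ^ 2 - 2 * (4 * p + q ^ 2)) * (4 * p + y ^ 2) ^ 2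
        + ((q + y) * (-(4 * p + y ^ 2)) + 16 * (q - y)) ^ 2 := by
  unfold belochF; ring

/-- Continuity of `F` restricted to the parabola. -/
lemma contg (p q : ℝ) : Continuous fun y : ℝ => belochF p q (-(y ^ 2) / 4) y := by
  unfold belochF; fun_prop

/-- If `4p + q² < 0`, then `F > 0` on the parabola. -/
lemma pos_of_neg (p q : ℝ) (h : 4 * p + q ^ 2 < 0) (y : ℝ) :
    0 < belochF p q (-(y ^ 2) / 4) y := by
  have k := key p q y
  rcases eq_or_ne (4 * p + y ^ 2) 0 with hd | hd
  · have k2 : 128 * belochF p q (-(y ^ 2) / 4) y = 256 * (q - y) ^ 2 := by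
      rw [k, hd]; ring
    have hqy : q - y ≠ 0 := by
      intro h0
      have hq : q = y := by linarith
      rw [hq] at h
      linarith
    have h2 : 0 < (q - y) ^ 2 := by
      rcases hqy.lt_or_gt with h' | h' <;> nlinarith
    linarith
  · have hd2 : 0 < (4 * p + y ^ 2) ^ 2 := by
      rcases hd.lt_or_gt with h' | h' <;> nlinarith
    nlinarith [k, hd2, sq_nonneg ((q + y) * (-(4 * p + y ^ 2)) + 16 * (q - y)),
      sq_nonneg ((q - y) * (4 * p + y ^ 2)),
      mul_pos (show (0:ℝ) < -2 * (4 * p + q ^ 2) by linarith) hd2]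

/-- If `4p + q² > 0` and `y` is far from `q`, then `F > 0` on the parabola. -/
lemma pos_of_far (p q : ℝ) (hs : 0 < 4 * p + q ^ 2) (y : ℝ)
    (hy : 2 * (4 * p + q ^ 2) + 1 ≤ (q - y) ^ 2) :
    0 < belochF p q (-(y ^ 2) / 4) y := by
  have k := key p q y
  rcases eq_or_ne (4 * p + y ^ 2) 0 with hd | hd
  · have k2 : 128 * belochF p q (-(y ^ 2) / 4) y = 256 * (q - y) ^ 2 := by
      rw [k, hd]; ring
    linarith
  · have hd2 : 0 < (4 * p + y ^ 2) ^ 2 := by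
      rcases hd.lt_or_gt with h' | h' <;> nlinarith
    nlinarith [k, hd2, sq_nonneg ((q + y) * (-(4 * p + y ^ 2)) + 16 * (q - y)),
      mul_nonneg (show (0:ℝ) ≤ (q - y) ^ 2 - 2 * (4 * p + q ^ 2) - 1 by linarith) hd2.le]

/-- The auxiliary function whose zero gives a point where `F < 0`. -/
def chi (p q y : ℝ) : ℝ := (q + y) * (-(4 * p) - y ^ 2) + 16 * (q - y)

lemma chi_cont (p q : ℝ) : Continuous (chi p q) := by
  unfold chi; fun_prop

set_option maxHeartbeats 1000000 in
/-- Core case: `q ≥ 0`, `s > 0` implies `F` is negative somewhere on the parabola. -/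
lemma exists_neg_nonneg (p q : ℝ) (hs : 0 < 4 * p + q ^ 2) (hq : 0 ≤ q) :
    ∃ y, belochF p q (-(y ^ 2) / 4) y < 0 := by
  by_cases hA : q = 0 ∨ 4 ≤ p
  · refine ⟨0, ?_⟩
    have k := key p q 0
    rcases hA with h0 | h4
    · subst h0
      nlinarith [k, hs, mul_pos (mul_pos hs hs) hs]
    · have hc : (64:ℝ) ≤ p ^ 3 := by nlinarith [h4, sq_nonneg p, sq_nonneg (p - 4)]
      have hq2 : 0 ≤ q ^ 2 * (p - 2) := mul_nonneg (sq_nonneg q) (by linarith)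
      nlinarith [k, hc, hq2]
  · obtain ⟨hq0, hp4'⟩ := not_or.mp hA
    have hp4 : p < 4 := lt_of_not_ge hp4'
    have hqpos : 0 < q := hq.lt_of_ne (Ne.symm hq0)
    set y0 : ℝ := Real.sqrt (max (-(4 * p)) 0) with hy0def
    have hy0sq : y0 ^ 2 = max (-(4 * p)) 0 := Real.sq_sqrt (le_max_right _ _)
    have hy0nn : 0 ≤ y0 := Real.sqrt_nonneg _
    have hy0ltsq : y0 ^ 2 < q ^ 2 := by
      rw [hy0sq]
      apply max_lt
      · linarith
      · positivity
    have hy0lt : y0 < q := by nlinarith [hy0nn, hqpos, hy0ltsq]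
    have hchi0 : 0 < chi p q y0 := by
      rcases le_or_gt p 0 with hp0 | hp0
      · have hmax : y0 ^ 2 = -(4 * p) := by
          rw [hy0sq, max_eq_left (by linarith)]
        have e : chi p q y0 = 16 * (q - y0) := by
          unfold chi; rw [← hmax]; ring
        rw [e]; linarith
      · have hy00 : y0 = 0 := by
          rw [hy0def, max_eq_right (by linarith : -(4 * p) ≤ 0), Real.sqrt_zero]
        rw [hy00]
        unfold chi
        nlinarith [hqpos, hp4]
    have hchiq : chi p q q < 0 := by
      unfold chi
      nlinarith [mul_pos hqpos hs]
    obtain ⟨y₁, hy₁mem, hy₁⟩ :=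
      intermediate_value_Ioo' hy0lt.le (chi_cont p q).continuousOn
        (Set.mem_Ioo.mpr ⟨hchiq, hchi0⟩)
    refine ⟨y₁, ?_⟩
    have ha : 0 < q - y₁ := by linarith [hy₁mem.2]
    have hy1pos : 0 < y₁ := lt_of_le_of_lt hy0nn hy₁mem.1
    have hb : 0 < q + y₁ := by linarith
    have h2 : -(4 * p) ≤ y0 ^ 2 := by rw [hy0sq]; exact le_max_left _ _
    have h1 : y0 ^ 2 ≤ y₁ ^ 2 := by nlinarith [hy₁mem.1, hy0nn]
    have hasq : (q - y₁) ^ 2 < 4 * p + q ^ 2 := by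
      nlinarith [mul_pos hy1pos ha, h1, h2]
    have hchi : (q + y₁) * (-(4 * p) - y₁ ^ 2) + 16 * (q - y₁) = 0 := hy₁
    have hdne : 4 * p + y₁ ^ 2 ≠ 0 := by
      intro h0
      have e0 : -(4 * p) - y₁ ^ 2 = 0 := by linarith
      rw [e0, mul_zero] at hchi
      linarith
    have hd2 : 0 < (4 * p + y₁ ^ 2) ^ 2 := by
      rcases hdne.lt_or_gt with h' | h' <;> nlinarith
    have e2 : (q + y₁) * (-(4 * p + y₁ ^ 2)) + 16 * (q - y₁) = 0 := by
      linear_combination hchi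
    have k := key p q y₁
    rw [e2] at k
    have hneg : ((q - y₁) ^ 2 - 2 * (4 * p + q ^ 2)) * (4 * p + y₁ ^ 2) ^ 2 < 0 :=
      mul_neg_of_neg_of_pos (by linarith) hd2
    nlinarith [k, hneg]

/-- `s > 0` implies `F` is negative somewhere on the parabola. -/
lemma exists_neg (p q : ℝ) (hs : 0 < 4 * p + q ^ 2) :
    ∃ y, belochF p q (-(y ^ 2) / 4) y < 0 := by
  rcases le_total 0 q with hq | hq
  · exact exists_neg_nonneg p q hs hq
  · obtain ⟨y, hy⟩ := exists_neg_nonneg p (-q)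
      (by rw [neg_pow]; simpa using hs) (by linarith)
    refine ⟨-y, ?_⟩
    have e : belochF p q (-((-y) ^ 2) / 4) (-y) = belochF p (-q) (-(y ^ 2) / 4) y := by
      unfold belochF; ring
    rw [e]; exact hy

/-- `s > 0` gives two distinct roots on the parabola. -/
lemma exists_two (p q : ℝ) (hs : 0 < 4 * p + q ^ 2) :
    ∃ y₁ y₂ : ℝ, y₁ ≠ y₂ ∧ belochF p q (-(y₁ ^ 2) / 4) y₁ = 0 ∧
      belochF p q (-(y₂ ^ 2) / 4) y₂ = 0 := by
  obtain ⟨w, hw⟩ := exists_neg p q hs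
  set R : ℝ := Real.sqrt (2 * (4 * p + q ^ 2) + 1) with hRdef
  have hRsq : R ^ 2 = 2 * (4 * p + q ^ 2) + 1 := Real.sq_sqrt (by linarith)
  have hRpos : 0 < R := Real.sqrt_pos.mpr (by linarith)
  set yL : ℝ := min w q - R with hyLdef
  set yR : ℝ := max w q + R with hyRdef
  have hgL : 0 < belochF p q (-(yL ^ 2) / 4) yL := by
    apply pos_of_far p q hs
    have h1 : 0 ≤ q - min w q := by
      have := min_le_right w q; linarith
    nlinarith [sq_nonneg (q - min w q), mul_nonneg hRpos.le h1, hRsq]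
  have hgR : 0 < belochF p q (-(yR ^ 2) / 4) yR := by
    apply pos_of_far p q hs
    have h1 : 0 ≤ max w q - q := by
      have := le_max_right w q; linarith
    nlinarith [sq_nonneg (max w q - q), mul_nonneg hRpos.le h1, hRsq]
  have hLw : yL < w := by
    have := min_le_left w q
    rw [hyLdef]; linarith
  have hwR : w < yR := by
    have := le_max_left w q
    rw [hyRdef]; linarith
  obtain ⟨r₁, hr₁mem, hr₁⟩ :=
    intermediate_value_Ioo' hLw.le ((contg p q).continuousOn)
      (Set.mem_Ioo.mpr ⟨hw, hgL⟩)
  obtain ⟨r₂, hr₂mem, hr₂⟩ :=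
    intermediate_value_Ioo hwR.le ((contg p q).continuousOn)
      (Set.mem_Ioo.mpr ⟨hw, hgR⟩)
  exact ⟨r₁, r₂, ne_of_lt (lt_trans hr₁mem.2 hr₂mem.1), hr₁, hr₂⟩

/-- `s < 0` implies empty intersection. -/
lemma empty_of_neg (p q : ℝ) (h : 4 * p + q ^ 2 < 0) :
    belochCurve p q ∩ parabolaG = ∅ := by
  rw [Set.eq_empty_iff_forall_notMem]
  rintro ⟨x, y⟩ ⟨h1, h2⟩
  have h2' : 4 * x + y ^ 2 = 0 := h2
  have hx : x = -(y ^ 2) / 4 := by linarith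
  have h1' : belochF p q x y = 0 := h1
  rw [hx] at h1'
  have := pos_of_neg p q h y
  linarith

/-- `s = 0` implies the intersection is the single point `(-q²/4, q)`. -/
lemma single_of_zero (p q : ℝ) (h : 4 * p + q ^ 2 = 0) :
    belochCurve p q ∩ parabolaG = {(-(q ^ 2) / 4, q)} := by
  have hp : p = -(q ^ 2) / 4 := by linarith
  subst hp
  ext X
  obtain ⟨x, y⟩ := X
  simp only [Set.mem_inter_iff, belochCurve, parabolaG, Set.mem_setOf_eq,
    Set.mem_singleton_iff, Prod.mk.injEq]
  constructor
  · rintro ⟨h1, h2⟩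
    have hx : x = -(y ^ 2) / 4 := by linarith
    rw [hx] at h1
    have key0 : (q - y) ^ 2 * ((y ^ 2 - q ^ 2) ^ 2 + ((q + y) ^ 2 + 16) ^ 2) = 0 := by
      have h1' := h1
      unfold belochF at h1'
      linear_combination (128 : ℝ) * h1'
    have hposf : 0 < (y ^ 2 - q ^ 2) ^ 2 + ((q + y) ^ 2 + 16) ^ 2 := by positivity
    have hqy : (q - y) ^ 2 = 0 := by
      rcases mul_eq_zero.mp key0 with h' | h'
      · exact h'
      · linarith
    have hy : y = q := by
      have := sq_eq_zero_iff.mp hqy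
      linarith
    constructor
    · rw [hx, hy]
    · exact hy
  · rintro ⟨hx, hy⟩
    constructor
    · rw [hx, hy]
      show belochF (-(q ^ 2) / 4) q (-(q ^ 2) / 4) q = 0
      unfold belochF; ring
    · rw [hx, hy]
      show 4 * (-(q ^ 2) / 4) + q ^ 2 = 0
      ring

/-- `s > 0` implies two distinct intersection points. -/
lemma two_of_pos (p q : ℝ) (h : 0 < 4 * p + q ^ 2) :
    ∃ X Y : ℝ × ℝ, X ≠ Y ∧ X ∈ belochCurve p q ∩ parabolaG ∧
      Y ∈ belochCurve p q ∩ parabolaG := by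
  obtain ⟨y₁, y₂, hne, h1, h2⟩ := exists_two p q h
  refine ⟨(-(y₁ ^ 2) / 4, y₁), (-(y₂ ^ 2) / 4, y₂), ?_, ⟨h1, ?_⟩, ⟨h2, ?_⟩⟩
  · intro hXY
    exact hne (congrArg Prod.snd hXY)
  · show 4 * (-(y₁ ^ 2) / 4) + y₁ ^ 2 = 0; ring
  · show 4 * (-(y₂ ^ 2) / 4) + y₂ ^ 2 = 0; ring

end Stmt16Aux

open Stmt16Aux in
/-- `𝓕 ∩ 𝓖` is empty iff `4p + q² < 0`, a single point iff `4p + q² = 0`,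
and contains at least two points iff `4p + q² > 0`. -/
theorem stmt_16 (p q : ℝ) :
    (belochCurve p q ∩ parabolaG = ∅ ↔ 4 * p + q ^ 2 < 0) ∧
    ((∃ X : ℝ × ℝ, belochCurve p q ∩ parabolaG = {X}) ↔ 4 * p + q ^ 2 = 0) ∧
    ((∃ X Y : ℝ × ℝ, X ≠ Y ∧ X ∈ belochCurve p q ∩ parabolaG ∧
        Y ∈ belochCurve p q ∩ parabolaG) ↔ 4 * p + q ^ 2 > 0) := by
  rcases lt_trichotomy (4 * p + q ^ 2) 0 with h | h | h
  · refine ⟨⟨fun _ => h, fun _ => empty_of_neg p q h⟩, ?_, ?_⟩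
    · constructor
      · rintro ⟨X, hX⟩
        exfalso
        rw [empty_of_neg p q h] at hX
        exact (Set.singleton_ne_empty X) hX.symm
      · intro h0; exfalso; linarith
    · constructor
      · rintro ⟨X, Y, _, hX, _⟩
        exfalso
        rw [empty_of_neg p q h] at hX
        exact (Set.notMem_empty X) hX
      · intro h0; exfalso; linarith
  · have hsingle := single_of_zero p q h
    refine ⟨?_, ⟨fun _ => h, fun _ => ⟨_, hsingle⟩⟩, ?_⟩
    · constructor
      · intro he
        exfalso
        rw [he] at hsingle
        exact (Set.singleton_ne_empty _) hsingle.symm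
      · intro h0; exfalso; linarith
    · constructor
      · rintro ⟨X, Y, hne, hX, hY⟩
        exfalso
        rw [hsingle] at hX hY
        exact hne (hX.trans hY.symm)
      · intro h0; exfalso; linarith
  · obtain two := two_of_pos p q h
    refine ⟨?_, ?_, ⟨fun _ => h, fun _ => two⟩⟩
    · constructor
      · intro he
        exfalso
        obtain ⟨X, Y, _, hX, _⟩ := two
        rw [he] at hX
        exact (Set.notMem_empty X) hX
      · intro h0; exfalso; linarith
    · constructor
      · rintro ⟨Z, hZ⟩
        exfalso
        obtain ⟨X, Y, hne, hX, hY⟩ := two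
        rw [hZ] at hX hY
        exact hne (hX.trans hY.symm)
      · intro h0; exfalso; linarith
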